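/- Let m ≥ 3 be an integer. For every y ∈ [0,π], ∫₀^π K_m(x,y)·sin x dx = ((m² − 1)/(m² − 4))·sin y. -/

import Mathlib

/-- For an integer `m ≥ 3` and `x, y ∈ [0,π]` with `x ≠ y`, the kernel
`K_m(x,y) = (1/(2π))·log((1 − cos(x+y))/(1 − cos(x−y)))
  + (6/π)·∑_{k=1}^∞ sin(kx)·sin(ky)/(m²k³ − 4k)`. -/
noncomputable def Kker (m : ℕ) (x y : ℝ) : ℝ :=
  1 / (2 * Real.pi) * Real.log ((1 - Real.cos (x + y)) / (1 - Real.cos (x - y))) +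
    6 / Real.pi * ∑' k : ℕ,
      Real.sin (((k : ℝ) + 1) * x) * Real.sin (((k : ℝ) + 1) * y) /
        ((m : ℝ) ^ 2 * ((k : ℝ) + 1) ^ 3 - 4 * ((k : ℝ) + 1))

open Real intervalIntegral MeasureTheory Set Filter

section KkerAux

lemma sin_half_sq (t : ℝ) : Real.sin (t / 2) ^ 2 = (1 - Real.cos t) / 2 := by
  have := Real.sin_sq_eq_half_sub (t / 2)
  rw [show 2 * (t / 2) = t by ring] at this
  linarith

lemma one_sub_cos_pos {t : ℝ} (h1 : t ≠ 0) (h2 : |t| < 2 * Real.pi) : 0 < 1 - Real.cos t := by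
  have hs : Real.sin (t / 2) ≠ 0 := by
    intro h
    rcases Real.sin_eq_zero_iff.mp h with ⟨n, hn⟩
    obtain ⟨ha, hb⟩ := abs_lt.mp h2
    have ht : t = n * (2 * Real.pi) := by linarith
    rcases lt_trichotomy (n : ℝ) 0 with hn0 | hn0 | hn0
    · have hn1 : (n : ℝ) ≤ -1 := by exact_mod_cast Int.le_of_lt_add_one (by exact_mod_cast hn0)
      nlinarith [Real.pi_pos]
    · apply h1; rw [ht, hn0]; ring
    · have hn1 : (1 : ℝ) ≤ n := by exact_mod_cast hn0
      nlinarith [Real.pi_pos]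
  have h4 := sin_half_sq t
  have h0 : 0 < Real.sin (t/2)^2 := lt_of_le_of_ne (sq_nonneg _) (Ne.symm (pow_ne_zero 2 hs))
  linarith

lemma cos_diff_sq_le {x y : ℝ} : (Real.cos y - Real.cos x) ^ 2 ≤ 2 * (1 - Real.cos (x - y)) := by
  have h := Real.cos_sub_cos y x
  have h2 := sin_half_sq (x - y)
  have hb : Real.sin ((y + x) / 2) ^ 2 ≤ 1 := Real.sin_sq_le_one _
  have h3 : Real.sin ((y - x) / 2) ^ 2 = Real.sin ((x - y) / 2) ^ 2 := by
    rw [show (y - x) / 2 = -((x - y) / 2) by ring, Real.sin_neg]; ring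
  have hsq : (Real.cos y - Real.cos x)^2 = 4 * Real.sin ((y+x)/2)^2 * Real.sin ((x-y)/2)^2 := by
    rw [h, ← h3]; ring
  nlinarith [sq_nonneg (Real.sin ((x-y)/2)), mul_nonneg (sub_nonneg.mpr hb) (sq_nonneg (Real.sin ((x-y)/2)))]

lemma tendsto_cos_log_zero (y : ℝ) :
    Tendsto (fun x => (Real.cos y - Real.cos x) * Real.log (1 - Real.cos (x - y)))
      (nhdsWithin y {y}ᶜ) (nhds 0) := by
  set G : ℝ → ℝ := fun x => 2 * Real.sqrt 2 *
    |Real.sqrt (1 - Real.cos (x - y)) * Real.log (Real.sqrt (1 - Real.cos (x - y)))| with hG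
  have hGc : Continuous G := by
    have h1 : Continuous fun x : ℝ => Real.sqrt (1 - Real.cos (x - y)) := by continuity
    exact continuous_const.mul ((Real.continuous_mul_log.comp h1).abs)
  have hG0 : G y = 0 := by simp [hG]
  have hGt : Tendsto G (nhdsWithin y {y}ᶜ) (nhds 0) := by
    rw [← hG0]
    exact (hGc.continuousAt.tendsto).mono_left nhdsWithin_le_nhds
  apply squeeze_zero_norm' _ hGt
  have hev : ∀ᶠ x in nhdsWithin y {y}ᶜ, x ≠ y ∧ |x - y| < 2 * Real.pi := by
    have h1 : ∀ᶠ x in nhdsWithin y {y}ᶜ, x ≠ y :=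
      eventually_mem_nhdsWithin.mono (fun x hx => hx)
    have h2 : ∀ᶠ x : ℝ in nhds y, |x - y| < 2 * Real.pi := eventually_abs_sub_lt y Real.two_pi_pos
    exact h1.and (h2.filter_mono nhdsWithin_le_nhds)
  filter_upwards [hev] with x hx
  obtain ⟨hx1, hx2⟩ := hx
  have hB : 0 < 1 - Real.cos (x - y) := one_sub_cos_pos (sub_ne_zero.mpr hx1) hx2
  set u := Real.sqrt (1 - Real.cos (x - y)) with hu
  have hu0 : 0 < u := Real.sqrt_pos.mpr hB
  have husq : u ^ 2 = 1 - Real.cos (x - y) := Real.sq_sqrt hB.le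
  have hlog : Real.log (1 - Real.cos (x - y)) = 2 * Real.log u := by
    rw [← husq, sq, Real.log_mul hu0.ne' hu0.ne']; ring
  have hcd : |Real.cos y - Real.cos x| ≤ Real.sqrt 2 * u := by
    rw [← Real.sqrt_sq_eq_abs, ← Real.sqrt_mul (by norm_num : (0:ℝ) ≤ 2)]
    exact Real.sqrt_le_sqrt (by nlinarith [cos_diff_sq_le (x := x) (y := y)])
  calc ‖(Real.cos y - Real.cos x) * Real.log (1 - Real.cos (x - y))‖
      = |Real.cos y - Real.cos x| * |Real.log (1 - Real.cos (x - y))| := abs_mul _ _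
    _ ≤ (Real.sqrt 2 * u) * |2 * Real.log u| := by
        apply mul_le_mul hcd (by rw [hlog]) (abs_nonneg _) (by positivity)
    _ = G x := by
        rw [hG]
        simp only [abs_mul, abs_of_pos hu0, abs_of_nonneg (by norm_num : (0:ℝ) ≤ 2)]
        simp only [← hu, abs_of_pos hu0]
        ring

noncomputable def gK (y x : ℝ) : ℝ := Real.log ((1 - Real.cos (x + y)) / (1 - Real.cos (x - y)))
noncomputable def FK (y x : ℝ) : ℝ := (Real.cos y - Real.cos x) * gK y x + 2 * x * Real.sin y

section
variable {y : ℝ} (hy1 : 0 < y) (hy2 : y < Real.pi)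
include hy1 hy2

lemma hApos {x : ℝ} (hx : x ∈ Icc 0 Real.pi) : 0 < 1 - Real.cos (x + y) := by
  have hx1 := hx.1; have hx2 := hx.2
  apply one_sub_cos_pos (by linarith : (0:ℝ) < x + y).ne'
  rw [abs_of_pos (by linarith)]
  linarith

lemma hBpos {x : ℝ} (hx : x ∈ Icc 0 Real.pi) (hxy : x ≠ y) : 0 < 1 - Real.cos (x - y) := by
  apply one_sub_cos_pos (sub_ne_zero.mpr hxy)
  rw [abs_sub_lt_iff]
  constructor <;> [skip; skip] <;> nlinarith [hx.1, hx.2, Real.pi_pos]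

omit hy1 hy2 in
lemma FK_self : FK y y = 2 * y * Real.sin y := by
  simp [FK, gK]

lemma contFK : ContinuousOn (FK y) (Icc 0 Real.pi) := by
  intro x hx
  by_cases hxy : x = y
  · subst hxy
    apply ContinuousAt.continuousWithinAt
    rw [← continuousWithinAt_compl_self]
    unfold ContinuousWithinAt
    rw [FK_self]
    have hA2 : (0:ℝ) < 1 - Real.cos (x + x) := by
      apply one_sub_cos_pos (by linarith : (0:ℝ) < x + x).ne'
      rw [abs_of_pos (by linarith)]; linarith
    have hAev : ∀ᶠ t in nhdsWithin x {x}ᶜ, 0 < 1 - Real.cos (t + x) := by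
      apply Filter.Eventually.filter_mono nhdsWithin_le_nhds
      have hc : Continuous fun t : ℝ => 1 - Real.cos (t + x) := by continuity
      exact hc.continuousAt.eventually (eventually_gt_nhds hA2)
    have hBev : ∀ᶠ t in nhdsWithin x {x}ᶜ, t ≠ x ∧ |t - x| < 2 * Real.pi := by
      exact (eventually_mem_nhdsWithin.mono fun t ht => ht).and
        ((eventually_abs_sub_lt x Real.two_pi_pos).filter_mono nhdsWithin_le_nhds)
    have heq : ∀ᶠ t in nhdsWithin x {x}ᶜ, FK x t =
        ((Real.cos x - Real.cos t) * Real.log (1 - Real.cos (t + x))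
          - (Real.cos x - Real.cos t) * Real.log (1 - Real.cos (t - x))) + 2 * t * Real.sin x := by
      filter_upwards [hAev, hBev] with t hA ⟨ht1, ht2⟩
      have hB : 0 < 1 - Real.cos (t - x) := one_sub_cos_pos (sub_ne_zero.mpr ht1) ht2
      unfold FK gK
      rw [Real.log_div hA.ne' hB.ne']; ring
    rw [Filter.tendsto_congr' heq]
    have l1 : Filter.Tendsto (fun t => (Real.cos x - Real.cos t) * Real.log (1 - Real.cos (t + x)))
        (nhdsWithin x {x}ᶜ) (nhds 0) := by
      have : ContinuousAt (fun t => (Real.cos x - Real.cos t) * Real.log (1 - Real.cos (t + x))) x := by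
        apply ContinuousAt.mul (by fun_prop)
        exact ContinuousAt.log (by fun_prop) hA2.ne'
      have h0 := this.tendsto.mono_left (nhdsWithin_le_nhds (s := {x}ᶜ))
      simpa using h0
    have l2 := tendsto_cos_log_zero x
    have l3 : Filter.Tendsto (fun t : ℝ => 2 * t * Real.sin x) (nhdsWithin x {x}ᶜ)
        (nhds (2 * x * Real.sin x)) := by
      exact (Continuous.continuousAt (by continuity)).tendsto.mono_left nhdsWithin_le_nhds
    have := (l1.sub l2).add l3
    simpa using this
  · apply ContinuousAt.continuousWithinAt
    have hA := hApos hy1 hy2 hx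
    have hB := hBpos hy1 hy2 hx hxy
    have hrat : ContinuousAt (fun t => (1 - Real.cos (t + y)) / (1 - Real.cos (t - y))) x :=
      ContinuousAt.div (by fun_prop) (by fun_prop) hB.ne'
    have hlog : ContinuousAt (gK y) x :=
      ContinuousAt.log hrat (by positivity : (0:ℝ) < (1 - Real.cos (x+y))/(1 - Real.cos (x-y))).ne'
    exact (ContinuousAt.mul (by fun_prop) hlog).add (by fun_prop)

end

lemma key_trig (x y : ℝ) (hA : (1:ℝ) - Real.cos (x+y) ≠ 0) (hB : (1:ℝ) - Real.cos (x-y) ≠ 0) :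
    (Real.cos y - Real.cos x) * (Real.sin (x+y)/(1 - Real.cos (x+y)) - Real.sin (x-y)/(1 - Real.cos (x-y))) = -2 * Real.sin y := by
  rw [Real.sin_add, Real.sin_sub, Real.cos_add, Real.cos_sub] at *
  rw [mul_comm (Real.cos x) (Real.cos y)] at hA hB
  field_simp
  linear_combination (-2*Real.sin y*Real.cos y*(Real.cos y - Real.cos x) - 2*(Real.sin y)^3 + 2*Real.sin y*((Real.sin y)^2+(Real.cos y)^2-1)) * (Real.sin_sq_add_cos_sq x) + (-2*Real.sin y*(Real.sin x)^2) * (Real.sin_sq_add_cos_sq y)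

lemma hasDerivAt_FK {y x : ℝ} (hA : 0 < 1 - Real.cos (x+y)) (hB : 0 < 1 - Real.cos (x-y)) :
    HasDerivAt (FK y) (Real.sin x * gK y x) x := by
  have hAc : Continuous fun t : ℝ => 1 - Real.cos (t + y) := by continuity
  have hBc : Continuous fun t : ℝ => 1 - Real.cos (t - y) := by continuity
  have dA : HasDerivAt (fun t : ℝ => Real.log (1 - Real.cos (t + y)))
      (Real.sin (x + y) / (1 - Real.cos (x + y))) x := by
    have h1 : HasDerivAt (fun t : ℝ => 1 - Real.cos (t + y)) (Real.sin (x + y)) x := by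
      have := ((Real.hasDerivAt_cos (x + y)).comp x ((hasDerivAt_id x).add_const y))
      simpa using (this.const_sub 1)
    simpa using h1.log hA.ne'
  have dB : HasDerivAt (fun t : ℝ => Real.log (1 - Real.cos (t - y)))
      (Real.sin (x - y) / (1 - Real.cos (x - y))) x := by
    have h1 : HasDerivAt (fun t : ℝ => 1 - Real.cos (t - y)) (Real.sin (x - y)) x := by
      have := ((Real.hasDerivAt_cos (x - y)).comp x ((hasDerivAt_id x).sub_const y))
      simpa using (this.const_sub 1)
    simpa using h1.log hB.ne'
  have dG := dA.sub dB
  have dC : HasDerivAt (fun t : ℝ => Real.cos y - Real.cos t) (Real.sin x) x := by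
    simpa using (Real.hasDerivAt_cos x).const_sub (Real.cos y)
  have dF0 : HasDerivAt
      (fun t : ℝ => (Real.cos y - Real.cos t) * (Real.log (1 - Real.cos (t + y)) - Real.log (1 - Real.cos (t - y))) + 2 * t * Real.sin y)
      (Real.sin x * gK y x) x := by
    have dprod := dC.mul dG
    have dlin : HasDerivAt (fun t : ℝ => 2 * t * Real.sin y) (2 * Real.sin y) x := by
      simpa [mul_comm, mul_assoc] using (hasDerivAt_id x).const_mul 2 |>.mul_const (Real.sin y)
    have := dprod.add dlin
    refine this.congr_deriv ?_
    rw [Pi.sub_apply]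
    have hgl : gK y x = Real.log (1 - Real.cos (x + y)) - Real.log (1 - Real.cos (x - y)) := by
      unfold gK; rw [Real.log_div hA.ne' hB.ne']
    rw [hgl, key_trig x y hA.ne' hB.ne']
    ring
  apply dF0.congr_of_eventuallyEq
  have hAev : ∀ᶠ t in nhds x, 0 < 1 - Real.cos (t + y) := hAc.continuousAt.eventually (eventually_gt_nhds hA)
  have hBev : ∀ᶠ t in nhds x, 0 < 1 - Real.cos (t - y) := hBc.continuousAt.eventually (eventually_gt_nhds hB)
  filter_upwards [hAev, hBev] with t hAt hBt
  unfold FK gK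
  rw [Real.log_div hAt.ne' hBt.ne']

section
variable {y : ℝ} (hy1 : 0 < y) (hy2 : y < Real.pi)
include hy1 hy2

lemma intervalIntegrable_sin_gK : IntervalIntegrable (fun x => Real.sin x * gK y x) volume 0 Real.pi := by
  -- positive lower bound δ for 1 - cos (x+y)
  obtain ⟨x₀, hx₀, hδ0⟩ := (isCompact_Icc (a := (0:ℝ)) (b := Real.pi)).exists_isMinOn
    (nonempty_Icc.mpr Real.pi_pos.le) (by fun_prop : ContinuousOn (fun x => 1 - Real.cos (x + y)) _)
  have hδ : ∀ x ∈ Icc (0:ℝ) Real.pi, 1 - Real.cos (x₀ + y) ≤ 1 - Real.cos (x + y) := fun x hx => hδ0 hx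
  set δ := 1 - Real.cos (x₀ + y) with hδdef
  have hδpos : 0 < δ := hApos hy1 hy2 hx₀
  set C := Real.log 2 - Real.log δ with hC
  have hglb : ∀ x ∈ Icc 0 Real.pi, x ≠ y → 0 ≤ gK y x + C := by
    intro x hx hxy
    have hA := hApos hy1 hy2 hx
    have hB := hBpos hy1 hy2 hx hxy
    have h1 : Real.log δ ≤ Real.log (1 - Real.cos (x + y)) := Real.log_le_log hδpos (hδ x hx)
    have h2 : Real.log (1 - Real.cos (x - y)) ≤ Real.log 2 :=
      Real.log_le_log hB (by nlinarith [Real.neg_one_le_cos (x - y)])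
    have hgl : gK y x = Real.log (1 - Real.cos (x + y)) - Real.log (1 - Real.cos (x - y)) := by
      unfold gK; rw [Real.log_div hA.ne' hB.ne']
    rw [hgl]; rw [hC]; linarith
  -- Φ and its derivative
  set Φ : ℝ → ℝ := fun x => FK y x + C * (1 - Real.cos x) with hPhi
  have hPhiCont : ContinuousOn Φ (Icc 0 Real.pi) :=
    (contFK hy1 hy2).add (by fun_prop)
  have hPhiDeriv : ∀ x ∈ Icc 0 Real.pi, x ≠ y → HasDerivAt Φ (Real.sin x * (gK y x + C)) x := by
    intro x hx hxy
    have d1 := hasDerivAt_FK (hApos hy1 hy2 hx) (hBpos hy1 hy2 hx hxy)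
    have d2 : HasDerivAt (fun t : ℝ => C * (1 - Real.cos t)) (C * Real.sin x) x := by
      have := ((Real.hasDerivAt_cos x).const_sub 1).const_mul C
      simpa using this
    have := d1.add d2
    refine this.congr_deriv ?_; ring
  -- integrability on the two halves
  have hI1 : IntegrableOn (fun x => Real.sin x * (gK y x + C)) (Ioc 0 y) := by
    apply integrableOn_deriv_of_nonneg
      (hPhiCont.mono (Icc_subset_Icc le_rfl hy2.le))
    · intro x hx
      exact hPhiDeriv x ⟨hx.1.le, hx.2.le.trans hy2.le⟩ hx.2.ne
    · intro x hx
      apply mul_nonneg (Real.sin_nonneg_of_nonneg_of_le_pi hx.1.le (hx.2.le.trans hy2.le))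
      exact hglb x ⟨hx.1.le, hx.2.le.trans hy2.le⟩ hx.2.ne
  have hI2 : IntegrableOn (fun x => Real.sin x * (gK y x + C)) (Ioc y Real.pi) := by
    apply integrableOn_deriv_of_nonneg
      (hPhiCont.mono (Icc_subset_Icc hy1.le le_rfl))
    · intro x hx
      exact hPhiDeriv x ⟨hy1.le.trans hx.1.le, hx.2.le⟩ hx.1.ne'
    · intro x hx
      apply mul_nonneg (Real.sin_nonneg_of_nonneg_of_le_pi (hy1.le.trans hx.1.le) hx.2.le)
      exact hglb x ⟨hy1.le.trans hx.1.le, hx.2.le⟩ hx.1.ne'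
  have hIunion : IntegrableOn (fun x => Real.sin x * (gK y x + C)) (Ioc 0 Real.pi) := by
    rw [← Set.Ioc_union_Ioc_eq_Ioc hy1.le hy2.le]
    exact hI1.union hI2
  have hInt : IntervalIntegrable (fun x => Real.sin x * gK y x) volume 0 Real.pi := by
    rw [intervalIntegrable_iff_integrableOn_Ioc_of_le Real.pi_pos.le]
    have : (fun x => Real.sin x * gK y x) =
        fun x => (Real.sin x * (gK y x + C)) - C * Real.sin x := by funext x; ring
    rw [this]
    exact hIunion.sub ((continuous_const.mul Real.continuous_sin).integrableOn_Ioc)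
  exact hInt

lemma integral_log_part : ∫ x in (0:ℝ)..Real.pi, Real.sin x * gK y x = 2 * Real.pi * Real.sin y := by
  have hInt := intervalIntegrable_sin_gK hy1 hy2
  -- FTC
  have hFTC := MeasureTheory.integral_eq_of_hasDerivAt_off_countable_of_le (FK y)
    (fun x => Real.sin x * gK y x) Real.pi_pos.le (Set.countable_singleton y)
    (contFK hy1 hy2)
    (fun x hx => hasDerivAt_FK (hApos hy1 hy2 ⟨hx.1.1.le, hx.1.2.le⟩)
      (hBpos hy1 hy2 ⟨hx.1.1.le, hx.1.2.le⟩ (by simpa using hx.2)))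
    hInt
  rw [hFTC]
  have hg0 : gK y 0 = 0 := by
    have hB := hBpos hy1 hy2 (left_mem_Icc.mpr Real.pi_pos.le) hy1.ne
    unfold gK
    have h2 : Real.cos ((0:ℝ) - y) = Real.cos y := by rw [zero_sub, Real.cos_neg]
    rw [h2] at hB
    rw [zero_add, zero_sub, Real.cos_neg, div_self hB.ne', Real.log_one]
  have hgπ : gK y Real.pi = 0 := by
    have hB := hBpos hy1 hy2 (right_mem_Icc.mpr Real.pi_pos.le) hy2.ne'
    unfold gK
    have h1 : Real.cos (Real.pi + y) = -Real.cos y := by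
      rw [Real.cos_add]; simp
    have h2 : Real.cos (Real.pi - y) = -Real.cos y := by
      rw [Real.cos_sub]; simp
    rw [h2] at hB
    rw [h1, h2, div_self hB.ne', Real.log_one]
  unfold FK
  rw [hg0, hgπ]
  ring

end

lemma integral_cos_mul' {c : ℝ} (hc : c ≠ 0) :
    ∫ x in (0:ℝ)..Real.pi, Real.cos (c * x) = Real.sin (c * Real.pi) / c := by
  have h : ∀ x : ℝ, HasDerivAt (fun t => Real.sin (c * t) / c) (Real.cos (c * x)) x := by
    intro x
    have h1 : HasDerivAt (fun t : ℝ => Real.sin (c * t)) (Real.cos (c * x) * c) x := by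
      have := (Real.hasDerivAt_sin (c * x)).comp x ((hasDerivAt_id x).const_mul c)
      simpa [mul_comm, Function.comp_def] using this
    have := h1.div_const c
    simpa [mul_div_assoc, mul_div_cancel_right₀ _ hc] using this
  rw [intervalIntegral.integral_eq_sub_of_hasDerivAt (fun x _ => h x)
    ((Real.continuous_cos.comp (continuous_const.mul continuous_id)).intervalIntegrable _ _)]
  simp

lemma integral_sin_mul_sin' (n : ℕ) :
    ∫ x in (0:ℝ)..Real.pi, Real.sin (((n:ℝ)+1) * x) * Real.sin x
      = if n = 0 then Real.pi / 2 else 0 := by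
  by_cases hn : n = 0
  · subst hn
    norm_num
    rw [show (fun x => Real.sin x * Real.sin x) = fun x => Real.sin x ^ 2 by funext x; ring]
    rw [integral_sin_sq]
    simp
  · rw [if_neg hn]
    have key : ∀ x : ℝ, Real.sin (((n:ℝ)+1) * x) * Real.sin x
        = (Real.cos ((n:ℝ) * x) - Real.cos (((n:ℝ)+2) * x)) / 2 := by
      intro x
      have := Real.cos_sub_cos ((n:ℝ) * x) (((n:ℝ)+2) * x)
      rw [show ((n:ℝ) * x + ((n:ℝ)+2) * x) / 2 = ((n:ℝ)+1) * x by ring,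
          show ((n:ℝ) * x - ((n:ℝ)+2) * x) / 2 = -x by ring, Real.sin_neg] at this
      linarith
    simp_rw [key]
    rw [intervalIntegral.integral_div]
    have hic : ∀ c : ℝ, IntervalIntegrable (fun x => Real.cos (c * x)) volume 0 Real.pi := by
      intro c
      exact Continuous.intervalIntegrable (by fun_prop) _ _
    rw [intervalIntegral.integral_sub (hic _) (hic _)]
    have hn0 : (n:ℝ) ≠ 0 := Nat.cast_ne_zero.mpr hn
    rw [integral_cos_mul' hn0, integral_cos_mul' (by positivity : (n:ℝ)+2 ≠ 0)]
    have h1 : Real.sin ((n:ℝ) * Real.pi) = 0 := by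
      exact_mod_cast Real.sin_nat_mul_pi n
    have h2 : Real.sin (((n:ℝ)+2) * Real.pi) = 0 := by
      have := Real.sin_nat_mul_pi (n+2)
      push_cast at this
      exact this
    rw [h1, h2]
    norm_num

lemma summable_bound' : Summable (fun k : ℕ => 1/(((k:ℝ)+1)^3)) := by
  have h := (Real.summable_one_div_nat_pow (p := 3)).mpr (by norm_num)
  have h2 := (summable_nat_add_iff 1).mpr h
  apply h2.congr
  intro k
  push_cast
  norm_num

lemma summable_bound : Summable (fun k : ℕ => 1/(5*((k:ℝ)+1)^3)) := by
  apply (summable_bound'.div_const 5).congr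
  intro k
  field_simp

lemma term_abs_le {m : ℕ} (hm : 3 ≤ m) (y : ℝ) (k : ℕ) (x : ℝ) :
    |Real.sin (((k:ℝ)+1)*x) * Real.sin (((k:ℝ)+1)*y) / ((m:ℝ)^2*((k:ℝ)+1)^3 - 4*((k:ℝ)+1))|
      ≤ 1/(5*((k:ℝ)+1)^3) := by
  have hm' : (3:ℝ) ≤ (m:ℝ) := by exact_mod_cast hm
  have hk : (0:ℝ) < (k:ℝ)+1 := by positivity
  have hD : 5*((k:ℝ)+1)^3 ≤ (m:ℝ)^2*((k:ℝ)+1)^3 - 4*((k:ℝ)+1) := by 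
    have hu3 : ((k:ℝ)+1) ≤ ((k:ℝ)+1)^3 := by nlinarith [sq_nonneg ((k:ℝ)+1), sq_nonneg ((k:ℝ)+1-1), Nat.cast_nonneg (α := ℝ) k]
    have hm9 : (9:ℝ) ≤ (m:ℝ)^2 := by nlinarith
    nlinarith [mul_nonneg (sub_nonneg.mpr hm9) (pow_pos hk 3).le]
  have hDpos : (0:ℝ) < (m:ℝ)^2*((k:ℝ)+1)^3 - 4*((k:ℝ)+1) := lt_of_lt_of_le (by positivity) hD
  rw [abs_div, abs_of_pos hDpos, abs_mul]
  apply div_le_div₀ (by positivity)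
    (mul_le_one₀ (Real.abs_sin_le_one _) (abs_nonneg _) (Real.abs_sin_le_one _))
    (by positivity) hD |>.trans
  rw [one_div]

lemma integral_series_part (m : ℕ) (hm : 3 ≤ m) (y : ℝ) :
    ∫ x in (0:ℝ)..Real.pi,
      (∑' k : ℕ, Real.sin (((k:ℝ)+1)*x) * Real.sin (((k:ℝ)+1)*y) /
        ((m:ℝ)^2*((k:ℝ)+1)^3 - 4*((k:ℝ)+1))) * Real.sin x
      = Real.pi/2 * (Real.sin y / ((m:ℝ)^2 - 4)) := by
  have hm' : (3:ℝ) ≤ (m:ℝ) := by exact_mod_cast hm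
  set D : ℕ → ℝ := fun k => (m:ℝ)^2*((k:ℝ)+1)^3 - 4*((k:ℝ)+1) with hD
  set f : ℕ → C(ℝ, ℝ) := fun k =>
    ⟨fun x => Real.sin (((k:ℝ)+1)*x) * Real.sin (((k:ℝ)+1)*y) / D k * Real.sin x, by fun_prop⟩ with hf
  have hfapp : ∀ k x, f k x = Real.sin (((k:ℝ)+1)*x) * Real.sin (((k:ℝ)+1)*y) / D k * Real.sin x :=
    fun k x => rfl
  have hnorm : ∀ k, ‖(f k).restrict (⟨uIcc (0:ℝ) Real.pi, isCompact_uIcc⟩ :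
      TopologicalSpace.Compacts ℝ)‖ ≤ 1/(5*((k:ℝ)+1)^3) := by
    intro k
    have hkpos : (0:ℝ) < 1/(5*((k:ℝ)+1)^3) := by positivity
    apply (ContinuousMap.norm_le _ hkpos.le).mpr
    rintro ⟨x, hx⟩
    rw [ContinuousMap.restrict_apply]
    rw [hfapp, Real.norm_eq_abs, abs_mul]
    have h1 := term_abs_le hm y k x
    have h2 : |Real.sin x| ≤ 1 := Real.abs_sin_le_one x
    calc |Real.sin (((k:ℝ)+1)*x) * Real.sin (((k:ℝ)+1)*y) / D k| * |Real.sin x|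
        ≤ (1/(5*((k:ℝ)+1)^3)) * 1 := mul_le_mul h1 h2 (abs_nonneg _) (by positivity)
      _ = 1/(5*((k:ℝ)+1)^3) := mul_one _
  have hsum : Summable fun k => ‖(f k).restrict (⟨uIcc (0:ℝ) Real.pi, isCompact_uIcc⟩ :
      TopologicalSpace.Compacts ℝ)‖ :=
    Summable.of_nonneg_of_le (fun k => norm_nonneg _) hnorm summable_bound
  have hinter := intervalIntegral.tsum_intervalIntegral_eq_of_summable_norm (a := 0) (b := Real.pi) hsum
  have hcong : ∀ x : ℝ, (∑' k : ℕ, Real.sin (((k:ℝ)+1)*x) * Real.sin (((k:ℝ)+1)*y) / D k) * Real.sin x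
      = ∑' k : ℕ, f k x := by
    intro x
    rw [← tsum_mul_right]
    exact tsum_congr fun k => (hfapp k x).symm
  rw [intervalIntegral.integral_congr (g := fun x => ∑' k : ℕ, f k x) (fun x _ => hcong x)]
  rw [← hinter]
  have hint_k : ∀ k : ℕ, (∫ x in (0:ℝ)..Real.pi, f k x)
      = (Real.sin (((k:ℝ)+1)*y) / D k) * (if k = 0 then Real.pi/2 else 0) := by
    intro k
    have heq : ∀ x : ℝ, f k x
        = (Real.sin (((k:ℝ)+1)*y) / D k) * (Real.sin (((k:ℝ)+1)*x) * Real.sin x) := by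
      intro x; rw [hfapp]; ring
    rw [intervalIntegral.integral_congr (g := fun x => (Real.sin (((k:ℝ)+1)*y) / D k) * (Real.sin (((k:ℝ)+1)*x) * Real.sin x)) (fun x _ => heq x)]
    rw [intervalIntegral.integral_const_mul, integral_sin_mul_sin' k]
  rw [tsum_congr hint_k]
  rw [tsum_eq_single 0 (by intro k hk; rw [if_neg hk, mul_zero])]
  rw [if_pos rfl]
  have hD0 : D 0 = (m:ℝ)^2 - 4 := by rw [hD]; norm_num
  rw [hD0]
  norm_num
  ring
lemma Kker_zero_right (m : ℕ) (x : ℝ) : Kker m x 0 = 0 := by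
  unfold Kker
  have h1 : Real.log ((1 - Real.cos (x + 0)) / (1 - Real.cos (x - 0))) = 0 := by
    rw [add_zero, sub_zero]
    rcases eq_or_ne (1 - Real.cos x) 0 with h | h
    · rw [h]; simp
    · rw [div_self h, Real.log_one]
  rw [h1]
  simp

lemma Kker_pi_right (m : ℕ) (x : ℝ) : Kker m x Real.pi = 0 := by
  unfold Kker
  have h1 : Real.log ((1 - Real.cos (x + Real.pi)) / (1 - Real.cos (x - Real.pi))) = 0 := by
    rw [Real.cos_add_pi, Real.cos_sub_pi]
    rcases eq_or_ne (1 - -Real.cos x) 0 with h | h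
    · rw [h]; simp
    · rw [div_self h, Real.log_one]
  rw [h1]
  have h2 : ∀ k : ℕ, Real.sin (((k:ℝ)+1) * Real.pi) = 0 := by
    intro k
    have := Real.sin_nat_mul_pi (k+1)
    push_cast at this
    exact this
  have h3 : (∑' k : ℕ, Real.sin (((k : ℝ) + 1) * x) * Real.sin (((k : ℝ) + 1) * Real.pi) /
      ((m : ℝ) ^ 2 * ((k : ℝ) + 1) ^ 3 - 4 * ((k : ℝ) + 1))) = 0 := by
    have hz : ∀ k : ℕ, Real.sin (((k : ℝ) + 1) * x) * Real.sin (((k : ℝ) + 1) * Real.pi) /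
        ((m : ℝ) ^ 2 * ((k : ℝ) + 1) ^ 3 - 4 * ((k : ℝ) + 1)) = (0:ℝ) := by
      intro k; rw [h2 k]; simp
    rw [tsum_congr hz]
    exact tsum_zero
  rw [h3]
  simp

end KkerAux

/-- For `m ≥ 3` and every `y ∈ [0,π]`,
`∫₀^π K_m(x,y)·sin x dx = ((m² − 1)/(m² − 4))·sin y`. -/
theorem integral_Kker_sin (m : ℕ) (hm : 3 ≤ m) (y : ℝ) (hy : y ∈ Set.Icc 0 Real.pi) :
    ∫ x in (0:ℝ)..Real.pi, Kker m x y * Real.sin x =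
      (((m : ℝ) ^ 2 - 1) / ((m : ℝ) ^ 2 - 4)) * Real.sin y := by
  have hm' : (3:ℝ) ≤ (m:ℝ) := by exact_mod_cast hm
  have hm4 : ((m:ℝ)^2 - 4) ≠ 0 := by nlinarith
  obtain ⟨hy0, hyπ⟩ := hy
  rcases eq_or_lt_of_le hy0 with h0 | h0
  · rw [← h0]
    simp [Kker_zero_right]
  rcases eq_or_lt_of_le hyπ with hπ | hπ
  · rw [hπ]
    simp [Kker_pi_right]
  -- main case
  have hsplit : ∀ x, Kker m x y * Real.sin x =
      1/(2*Real.pi) * (Real.sin x * gK y x) +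
      6/Real.pi * ((∑' k : ℕ, Real.sin (((k : ℝ) + 1) * x) * Real.sin (((k : ℝ) + 1) * y) /
        ((m : ℝ) ^ 2 * ((k : ℝ) + 1) ^ 3 - 4 * ((k : ℝ) + 1))) * Real.sin x) := by
    intro x
    unfold Kker gK
    ring
  rw [intervalIntegral.integral_congr (g := fun x =>
      1/(2*Real.pi) * (Real.sin x * gK y x) +
      6/Real.pi * ((∑' k : ℕ, Real.sin (((k : ℝ) + 1) * x) * Real.sin (((k : ℝ) + 1) * y) /
        ((m : ℝ) ^ 2 * ((k : ℝ) + 1) ^ 3 - 4 * ((k : ℝ) + 1))) * Real.sin x))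
    (fun x _ => hsplit x)]
  have hScont : Continuous (fun x : ℝ => ∑' k : ℕ,
      Real.sin (((k : ℝ) + 1) * x) * Real.sin (((k : ℝ) + 1) * y) /
        ((m : ℝ) ^ 2 * ((k : ℝ) + 1) ^ 3 - 4 * ((k : ℝ) + 1))) := by
    apply continuous_tsum (fun k => by fun_prop) summable_bound
    intro k x
    exact term_abs_le hm y k x
  have h1 : IntervalIntegrable (fun x => 1/(2*Real.pi) * (Real.sin x * gK y x)) volume 0 Real.pi :=
    (intervalIntegrable_sin_gK h0 hπ).const_mul _
  have h2 : IntervalIntegrable (fun x =>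
      6/Real.pi * ((∑' k : ℕ, Real.sin (((k : ℝ) + 1) * x) * Real.sin (((k : ℝ) + 1) * y) /
        ((m : ℝ) ^ 2 * ((k : ℝ) + 1) ^ 3 - 4 * ((k : ℝ) + 1))) * Real.sin x)) volume 0 Real.pi :=
    Continuous.intervalIntegrable (by fun_prop (disch := skip)) _ _
  rw [intervalIntegral.integral_add h1 h2]
  rw [intervalIntegral.integral_const_mul, intervalIntegral.integral_const_mul]
  rw [integral_log_part h0 hπ, integral_series_part m hm y]
  have hπ0 : Real.pi ≠ 0 := Real.pi_ne_zero
  field_simp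
  ring
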